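/- The branch homomorphism β : T → S is injective. Consequently the tree product on T is associative, and T with this product is a CQP monoid that is the initial object in the category of CQP monoids: for every CQP monoid N there is a unique CQP monoid homomorphism T → N. -/

import Mathlib

/-!
`B` acts on the right on partial stacks over `{0, 1}`: `πᵢ` pushes `i`, `πᵢ*` pops `i` (and fails
on any other top), `0` always fails. A word `w ∈ F` turns the empty stack into its reversal, whereas
every element of `β(node A B) = π₁* β(A) ∪ π₂* β(B)` fails on it; so a leaf and a node never have
the same image, and two leaves have the same image only if their colors agree. Because
`πᵢ πⱼ* = δᵢⱼ`, left multiplication by `{0, πᵢ}` recovers `X` or `Y` from `Σ(X, Y)`, and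
injectivity follows by induction on trees.

Associativity and the CQP laws of `T` hold by induction on trees. The morphism to a CQP monoid `N`
sends a leaf `w` to the image of `w` and a node to `Σ`: it is multiplicative because the CQP laws of
`N` mirror the recursive definition of the tree product, and unique because `T` is generated by
`π₁, π₂` under product and `Σ`.
-/

open scoped Pointwise

/-- Generators of the branch monoid `B`: π₁, π₂, their stars, and 0. -/
inductive Bgen : Type
  | pi : Fin 2 → Bgen
  | pis : Fin 2 → Bgen
  | zero : Bgen

/-- Defining relations of the branch monoid: `0·b = b·0 = 0` and `πᵢπⱼ* = δᵢⱼ`. -/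
inductive Brel : FreeMonoid Bgen → FreeMonoid Bgen → Prop
  | zero_mul (x : FreeMonoid Bgen) :
      Brel (FreeMonoid.of Bgen.zero * x) (FreeMonoid.of Bgen.zero)
  | mul_zero (x : FreeMonoid Bgen) :
      Brel (x * FreeMonoid.of Bgen.zero) (FreeMonoid.of Bgen.zero)
  | pi_pis_same (i : Fin 2) :
      Brel (FreeMonoid.of (Bgen.pi i) * FreeMonoid.of (Bgen.pis i)) 1
  | pi_pis_ne (i j : Fin 2) : i ≠ j →
      Brel (FreeMonoid.of (Bgen.pi i) * FreeMonoid.of (Bgen.pis j))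
        (FreeMonoid.of Bgen.zero)

/-- The congruence generated by the defining relations. -/
def Bcon : Con (FreeMonoid Bgen) := conGen Brel

/-- The branch monoid `B`. -/
abbrev Bmon : Type := Bcon.Quotient

/-- The absorbing element `0` of `B`. -/
def bz : Bmon := Bcon.mk' (FreeMonoid.of Bgen.zero)

/-- The image of πᵢ in `B`. -/
def bpi (i : Fin 2) : Bmon := Bcon.mk' (FreeMonoid.of (Bgen.pi i))

/-- The image of πᵢ* in `B`. -/
def bpis (i : Fin 2) : Bmon := Bcon.mk' (FreeMonoid.of (Bgen.pis i))

/-- The inclusion of the free monoid `F` on π₁, π₂ into `B`. -/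
def ιF : FreeMonoid (Fin 2) →* Bmon :=
  Bcon.mk'.comp (FreeMonoid.map Bgen.pi)

/-- The star `w*` of a word `w ∈ F`, as an element of `B`: reverse the word and
star each letter. -/
def bstar (w : FreeMonoid (Fin 2)) : Bmon :=
  Bcon.mk' (FreeMonoid.ofList (((FreeMonoid.toList w).reverse).map Bgen.pis))

theorem bz_mul (x : Bmon) : bz * x = bz := by
  induction x using Con.induction_on with
  | H x => exact Con.eq Bcon |>.2 (ConGen.Rel.of _ _ (Brel.zero_mul x))

theorem mul_bz (x : Bmon) : x * bz = bz := by
  induction x using Con.induction_on with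
  | H x => exact Con.eq Bcon |>.2 (ConGen.Rel.of _ _ (Brel.mul_zero x))

/-- The monoid `S` of subsets of `B` containing `0`, under elementwise
multiplication; the identity is `{0, 1}`. -/
def Smon : Type := {X : Set Bmon // bz ∈ X}

noncomputable instance : Monoid Smon where
  mul X Y := ⟨X.val * Y.val, ⟨bz, X.prop, bz, Y.prop, bz_mul bz⟩⟩
  one := ⟨{bz, 1}, Or.inl rfl⟩
  mul_assoc X Y Z := Subtype.ext (mul_assoc X.val Y.val Z.val)
  one_mul X := Subtype.ext <| by
    show ({bz, 1} : Set Bmon) * X.val = X.val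
    rw [Set.insert_eq, Set.union_mul, Set.singleton_mul, Set.singleton_mul]
    ext b
    constructor
    · rintro (⟨x, hx, rfl⟩ | ⟨x, hx, rfl⟩)
      · simpa [bz_mul] using X.prop
      · simpa [one_mul] using hx
    · intro hb
      exact Or.inr ⟨b, hb, one_mul b⟩
  mul_one X := Subtype.ext <| by
    show X.val * ({bz, 1} : Set Bmon) = X.val
    rw [Set.insert_eq, Set.mul_union, Set.mul_singleton, Set.mul_singleton]
    ext b
    constructor
    · rintro (⟨x, hx, rfl⟩ | ⟨x, hx, rfl⟩)
      · simpa [mul_bz] using X.prop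
      · simpa [mul_one] using hx
    · intro hb
      exact Or.inr ⟨b, hb, mul_one b⟩

theorem Smon_mul_val (X Y : Smon) : (X * Y).val = X.val * Y.val := rfl

theorem Smon_one_val : (1 : Smon).val = {bz, 1} := rfl

/-- The element `{0, πᵢ}` of `S`. -/
def sπ (i : Fin 2) : Smon := ⟨{bz, bpi i}, Or.inl rfl⟩

/-- The element `{0, πᵢ*}` of `S`. -/
def sπs (i : Fin 2) : Smon := ⟨{bz, bpis i}, Or.inl rfl⟩

/-- The CQP operation on `S`: `Σ(X, Y) = π₁* X ∪ π₂* Y`. -/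
def SgS (X Y : Smon) : Smon :=
  ⟨({bz, bpis 0} : Set Bmon) * X.val ∪ ({bz, bpis 1} : Set Bmon) * Y.val,
    Or.inl ⟨bz, Or.inl rfl, bz, X.prop, bz_mul bz⟩⟩

/-- The free magma `T` on the free monoid `F` on π₁, π₂: finite nonempty ordered
binary trees with leaves colored by elements of `F`. -/
inductive Tm : Type
  | leaf : FreeMonoid (Fin 2) → Tm
  | node : Tm → Tm → Tm

/-- The action of the generator πᵢ on `T`: it picks out the `i`-th subtree of a
node, and acts by left multiplication on (the color of) a single leaf. -/
def pact (i : Fin 2) : Tm → Tm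
  | .leaf w => .leaf (FreeMonoid.of i * w)
  | .node A B => if i = 0 then A else B

/-- The left action of a word `w ∈ F` on `T`, applying the symbols of `w` one at
a time from right to left. -/
def wact (w : FreeMonoid (Fin 2)) (A : Tm) : Tm :=
  (FreeMonoid.toList w).foldr pact A

/-- The product on `T`: `A * B` replaces each leaf of `A` of color `w` by `w • B`. -/
def tmul : Tm → Tm → Tm
  | .leaf w, B => wact w B
  | .node A₁ A₂, B => .node (tmul A₁ B) (tmul A₂ B)

/-- The identity of `T`: a single leaf colored by the empty word. -/
def tone : Tm := .leaf 1

/-- The list of leaves of a tree `A ∈ T`, in order, recorded as pairs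
`(path, color)`: the path from the root to the leaf is described by the word
`path` read from right to left, and `color` is the color of the leaf. -/
def tleaves : Tm → List (FreeMonoid (Fin 2) × FreeMonoid (Fin 2))
  | .leaf w => [(1, w)]
  | .node A B =>
      ((tleaves A).map fun pc => (pc.1 * FreeMonoid.of 0, pc.2)) ++
        ((tleaves B).map fun pc => (pc.1 * FreeMonoid.of 1, pc.2))

/-- A categorical quasiproduct structure on a monoid. -/
def IsCQP {M : Type*} [Monoid M] (Sg : M → M → M) (π₁ π₂ : M) : Prop :=
  (∀ a b, π₁ * Sg a b = a) ∧ (∀ a b, π₂ * Sg a b = b) ∧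
    (∀ a b c, Sg (a * c) (b * c) = Sg a b * c)

/-- The branch homomorphism `β : T → S`: the magma homomorphism sending a leaf
of color `w` to `{0, w}`. -/
noncomputable def βmap : Tm → Smon
  | .leaf w => ⟨{bz, ιF w}, Or.inl rfl⟩
  | .node A B => SgS (βmap A) (βmap B)

/-- Partial maps on stacks over `{0, 1}`; `f * g` applies `f` first. -/
def StackOp : Type := List (Fin 2) → Option (List (Fin 2))

instance : Monoid StackOp where
  one := some
  mul f g l := (f l).bind g
  mul_assoc f g h := funext fun l => by
    show ((f l).bind g).bind h = (f l).bind fun a => (g a).bind h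
    cases f l <;> rfl
  one_mul _ := rfl
  mul_one f := funext fun l => by
    show (f l).bind some = f l
    cases f l <;> rfl

theorem StackOp.mul_apply (f g : StackOp) (l : List (Fin 2)) : (f * g) l = (f l).bind g := rfl

def Bgen.toStackOp : Bgen → StackOp
  | .pi i => fun l => some (i :: l)
  | .pis i => fun
      | [] => none
      | j :: l => if j = i then some l else none
  | .zero => fun _ => none

theorem Bcon_le_ker : Bcon ≤ Con.ker (FreeMonoid.lift Bgen.toStackOp) := by
  refine Con.conGen_le.2 fun x y h => ?_
  rw [Con.ker_rel]
  funext l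
  cases h <;> simp only [map_mul, map_one, FreeMonoid.lift_eval_of, StackOp.mul_apply]
  case zero_mul => rfl
  case mul_zero x => cases FreeMonoid.lift Bgen.toStackOp x l <;> rfl
  case pi_pis_same => exact if_pos rfl
  case pi_pis_ne hij => exact if_neg hij

def Bmon.toStackOp : Bmon →* StackOp := Bcon.lift _ Bcon_le_ker

theorem Bmon.toStackOp_mk (x : FreeMonoid Bgen) :
    Bmon.toStackOp (Bcon.mk' x) = FreeMonoid.lift Bgen.toStackOp x :=
  Con.lift_mk' _ _

theorem Bmon.toStackOp_bz (l : List (Fin 2)) : Bmon.toStackOp bz l = none := by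
  rw [bz, Bmon.toStackOp_mk, FreeMonoid.lift_eval_of]
  rfl

theorem Bmon.toStackOp_bpi (i : Fin 2) (l : List (Fin 2)) :
    Bmon.toStackOp (bpi i) l = some (i :: l) := by
  rw [bpi, Bmon.toStackOp_mk, FreeMonoid.lift_eval_of]
  rfl

theorem Bmon.toStackOp_bpis_mul_nil (i : Fin 2) (b : Bmon) :
    Bmon.toStackOp (bpis i * b) [] = none := by
  rw [map_mul, StackOp.mul_apply, bpis, Bmon.toStackOp_mk, FreeMonoid.lift_eval_of]
  rfl

theorem ιF_of (i : Fin 2) : ιF (FreeMonoid.of i) = bpi i := rfl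

theorem Bmon.toStackOp_ιF (w : FreeMonoid (Fin 2)) (l : List (Fin 2)) :
    Bmon.toStackOp (ιF w) l = some (w.toList.reverse ++ l) := by
  induction w using FreeMonoid.inductionOn' generalizing l with
  | one => rfl
  | of_mul i w ih =>
    rw [map_mul, ιF_of, map_mul, StackOp.mul_apply, Bmon.toStackOp_bpi, FreeMonoid.toList_of_mul,
      List.reverse_cons, List.append_assoc]
    exact ih (i :: l)

theorem ιF_ne_bz (w : FreeMonoid (Fin 2)) : ιF w ≠ bz := fun h => by
  simpa [Bmon.toStackOp_ιF, Bmon.toStackOp_bz] using congr_arg (Bmon.toStackOp · []) h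

theorem ιF_injective : Function.Injective ιF := fun v w h => by
  simpa [Bmon.toStackOp_ιF] using congr_arg (Bmon.toStackOp · []) h

theorem bpi_mul_bpis_self (i : Fin 2) : bpi i * bpis i = 1 :=
  (Con.eq Bcon).2 (ConGen.Rel.of _ _ (Brel.pi_pis_same i))

theorem bpi_mul_bpis_of_ne {i j : Fin 2} (h : i ≠ j) : bpi i * bpis j = bz :=
  (Con.eq Bcon).2 (ConGen.Rel.of _ _ (Brel.pi_pis_ne i j h))

theorem pair_bz_mul_pair_bz (x y : Bmon) :
    ({bz, x} : Set Bmon) * {bz, y} = {bz, x * y} := by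
  simp only [Set.insert_eq, Set.union_mul, Set.mul_union, Set.singleton_mul_singleton, bz_mul,
    mul_bz]
  ext; simp only [Set.mem_union, Set.mem_singleton_iff]; tauto

theorem Smon.pair_bz_one_mul (X : Smon) : ({bz, 1} : Set Bmon) * X.val = X.val :=
  congr_arg Subtype.val (one_mul X)

theorem Smon.singleton_bz_mul (X : Smon) : ({bz} : Set Bmon) * X.val = {bz} := by
  rw [Set.singleton_mul]
  simp only [bz_mul]
  exact Set.Nonempty.image_const ⟨bz, X.prop⟩ bz

theorem SgS_val (X Y : Smon) :
    (SgS X Y).val = ({bz, bpis 0} : Set Bmon) * X.val ∪ ({bz, bpis 1} : Set Bmon) * Y.val :=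
  rfl

theorem pair_bz_mul_SgS (x : Bmon) (X Y : Smon) :
    ({bz, x} : Set Bmon) * (SgS X Y).val =
      ({bz, x * bpis 0} : Set Bmon) * X.val ∪ ({bz, x * bpis 1} : Set Bmon) * Y.val := by
  rw [SgS_val, Set.mul_union, ← mul_assoc, ← mul_assoc, pair_bz_mul_pair_bz, pair_bz_mul_pair_bz]

theorem sπ_zero_mul_SgS (X Y : Smon) : sπ 0 * SgS X Y = X := Subtype.ext <| by
  show ({bz, bpi 0} : Set Bmon) * (SgS X Y).val = X.val
  rw [pair_bz_mul_SgS, bpi_mul_bpis_self, bpi_mul_bpis_of_ne (by decide), Set.pair_eq_singleton,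
    Smon.pair_bz_one_mul, Smon.singleton_bz_mul, Set.union_singleton, Set.insert_eq_of_mem X.prop]

theorem sπ_one_mul_SgS (X Y : Smon) : sπ 1 * SgS X Y = Y := Subtype.ext <| by
  show ({bz, bpi 1} : Set Bmon) * (SgS X Y).val = Y.val
  rw [pair_bz_mul_SgS, bpi_mul_bpis_self, bpi_mul_bpis_of_ne (by decide), Set.pair_eq_singleton,
    Smon.pair_bz_one_mul, Smon.singleton_bz_mul, Set.singleton_union, Set.insert_eq_of_mem Y.prop]

theorem Bmon.toStackOp_nil_of_mem_SgS {X Y : Smon} {b : Bmon} (hb : b ∈ (SgS X Y).val) :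
    Bmon.toStackOp b [] = none := by
  obtain ⟨c, hc, b, -, rfl⟩ | ⟨c, hc, b, -, rfl⟩ := hb <;> obtain rfl | rfl := hc <;>
    simp only [bz_mul, Bmon.toStackOp_bz, Bmon.toStackOp_bpis_mul_nil]

theorem βmap_leaf_ne_node (w : FreeMonoid (Fin 2)) (A B : Tm) :
    βmap (.leaf w) ≠ βmap (.node A B) := fun h => by
  have hw : ιF w ∈ (βmap (.node A B)).val := h ▸ Or.inr rfl
  simpa [Bmon.toStackOp_ιF] using Bmon.toStackOp_nil_of_mem_SgS hw

theorem βmap_injective : Function.Injective βmap := by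
  intro A A' h
  induction A generalizing A' with
  | leaf w =>
    cases A' with
    | leaf w' =>
      have hpair := congr_arg Subtype.val h
      simp only [βmap, Set.pair_eq_pair_iff, true_and] at hpair
      obtain hw | ⟨hw, -⟩ := hpair
      · rw [ιF_injective hw]
      · exact absurd hw.symm (ιF_ne_bz w')
    | node B B' => exact absurd h (βmap_leaf_ne_node w B B')
  | node B C ihB ihC =>
    cases A' with
    | leaf w => exact absurd h.symm (βmap_leaf_ne_node w B C)
    | node B' C' =>
      have hB := congr_arg (sπ 0 * ·) h
      have hC := congr_arg (sπ 1 * ·) h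
      simp only [βmap, sπ_zero_mul_SgS, sπ_one_mul_SgS] at hB hC
      rw [ihB hB, ihC hC]

theorem wact_of_mul (i : Fin 2) (w : FreeMonoid (Fin 2)) (A : Tm) :
    wact (FreeMonoid.of i * w) A = pact i (wact w A) := rfl

theorem wact_leaf (w v : FreeMonoid (Fin 2)) : wact w (.leaf v) = .leaf (w * v) := by
  induction w using FreeMonoid.inductionOn' with
  | one => rw [one_mul]; rfl
  | of_mul i w ih => rw [wact_of_mul, ih, mul_assoc]; rfl

theorem tmul_leaf_leaf (v w : FreeMonoid (Fin 2)) : tmul (.leaf v) (.leaf w) = .leaf (v * w) :=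
  wact_leaf v w

theorem pact_tmul (i : Fin 2) (B C : Tm) : pact i (tmul B C) = tmul (pact i B) C := by
  cases B with
  | leaf w => rfl
  | node B₁ B₂ => simp only [tmul, pact]; split_ifs <;> rfl

theorem wact_tmul (w : FreeMonoid (Fin 2)) (B C : Tm) :
    wact w (tmul B C) = tmul (wact w B) C := by
  induction w using FreeMonoid.inductionOn' with
  | one => rfl
  | of_mul i w ih => rw [wact_of_mul, wact_of_mul, ih, pact_tmul]

theorem tmul_assoc (A B C : Tm) : tmul (tmul A B) C = tmul A (tmul B C) := by
  induction A with
  | leaf w => exact (wact_tmul w B C).symm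
  | node A₁ A₂ ih₁ ih₂ => simp only [tmul, ih₁, ih₂]

theorem tmul_tone (A : Tm) : tmul A tone = A := by
  induction A with
  | leaf w => rw [tone, tmul_leaf_leaf, mul_one]
  | node A₁ A₂ ih₁ ih₂ => simp only [tmul, ih₁, ih₂]

namespace Tm

variable {N : Type*} [Monoid N] (Sg : N → N → N) (p : Fin 2 → N)

def lift : Tm → N
  | .leaf w => FreeMonoid.lift p w
  | .node A B => Sg (lift A) (lift B)

variable {Sg p}

theorem lift_pact (hN : IsCQP Sg (p 0) (p 1)) (i : Fin 2) (C : Tm) :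
    lift Sg p (pact i C) = p i * lift Sg p C := by
  cases C with
  | leaf v => simp only [pact, lift, map_mul, FreeMonoid.lift_eval_of]
  | node C₁ C₂ =>
    fin_cases i
    · exact (hN.1 _ _).symm
    · exact (hN.2.1 _ _).symm

theorem lift_wact (hN : IsCQP Sg (p 0) (p 1)) (w : FreeMonoid (Fin 2)) (C : Tm) :
    lift Sg p (wact w C) = FreeMonoid.lift p w * lift Sg p C := by
  induction w using FreeMonoid.inductionOn' with
  | one => rw [map_one, one_mul]; rfl
  | of_mul i w ih =>
    rw [wact_of_mul, lift_pact hN, ih, map_mul, FreeMonoid.lift_eval_of, mul_assoc]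

theorem lift_tmul (hN : IsCQP Sg (p 0) (p 1)) (A B : Tm) :
    lift Sg p (tmul A B) = lift Sg p A * lift Sg p B := by
  induction A with
  | leaf w => exact lift_wact hN w B
  | node A₁ A₂ ih₁ ih₂ => simp only [tmul, lift, ih₁, ih₂, hN.2.2]

theorem eq_lift (f : Tm → N) (h_one : f tone = 1) (h_mul : ∀ A B, f (tmul A B) = f A * f B)
    (h_gen : ∀ i, f (.leaf (FreeMonoid.of i)) = p i)
    (h_node : ∀ A B, f (.node A B) = Sg (f A) (f B)) : f = lift Sg p := by
  funext A
  induction A with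
  | leaf w =>
    induction w using FreeMonoid.inductionOn' with
    | one => exact h_one.trans (map_one _).symm
    | of_mul i w ih =>
      rw [lift, ← tmul_leaf_leaf, h_mul, h_gen, ih, map_mul, FreeMonoid.lift_eval_of]; rfl
  | node A B ihA ihB => rw [h_node, ihA, ihB]; rfl

end Tm

/-- The branch homomorphism `β : T → S` is injective; consequently the tree
product on `T` is associative, `(T, Σ, π₁, π₂)` is a CQP monoid (with
`Σ(A,B) = node A B`), and `T` is the initial CQP monoid: for every CQP monoid
`N` there is a unique CQP monoid homomorphism `T → N`. -/
theorem t_universal_cqp :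
    Function.Injective βmap ∧
    (∀ A B C : Tm, tmul (tmul A B) C = tmul A (tmul B C)) ∧
    (∀ A : Tm, tmul tone A = A) ∧ (∀ A : Tm, tmul A tone = A) ∧
    (∀ A B : Tm, tmul (.leaf (FreeMonoid.of 0)) (.node A B) = A) ∧
    (∀ A B : Tm, tmul (.leaf (FreeMonoid.of 1)) (.node A B) = B) ∧
    (∀ A B C : Tm, Tm.node (tmul A C) (tmul B C) = tmul (.node A B) C) ∧
    ∀ (N : Type) [Monoid N] (Sg : N → N → N) (p : Fin 2 → N),
      IsCQP Sg (p 0) (p 1) →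
      ∃! f : Tm → N, f tone = 1 ∧ (∀ A B, f (tmul A B) = f A * f B) ∧
        (∀ i, f (.leaf (FreeMonoid.of i)) = p i) ∧
        (∀ A B, f (.node A B) = Sg (f A) (f B)) := by
  refine ⟨βmap_injective, tmul_assoc, fun _ => rfl, tmul_tone, fun _ _ => rfl, fun _ _ => rfl,
    fun _ _ _ => rfl, fun N _ Sg p hN => ?_⟩
  refine ⟨Tm.lift Sg p, ⟨map_one _, Tm.lift_tmul hN, FreeMonoid.lift_eval_of p, fun _ _ => rfl⟩, ?_⟩
  rintro f ⟨h_one, h_mul, h_gen, h_node⟩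
  exact Tm.eq_lift f h_one h_mul h_gen h_node
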